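/- Let X be a normed space over ℂ and let u ∈ X with ‖u‖ = 1. Suppose there exist a complex Hilbert space H, a continuous linear map Ψ : X → B(H) with ‖Ψ‖ ≤ 1 and Ψ(u) = id_H, and a constant c > 0 such that ‖Ψ(x)‖ ≥ c·‖x‖ for all x ∈ X. Then n(X;u) ≥ c/2; in particular n(X;u) > 0, and if Ψ is an isometry then n(X;u) ≥ 1/2. -/

import Mathlib

/-!
Every unit vector `h ∈ H` gives a state `T ↦ ⟪h, T h⟫` of `B(H)` at `id_H`, and composing states
of `B(H)` with the unital contraction `Ψ` gives states of `X` at `u`. Hence `γ^u(x)` dominates the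
numerical radius of `Ψ x`, which by polarization and the parallelogram law is at least `‖Ψ x‖ / 2`,
and `‖Ψ x‖ ≥ c` on the unit sphere.
-/

/-- `S(X;u)`: the set of norm-one continuous linear functionals attaining value `1` at `u`. -/
def geomStates {X : Type*} [NormedAddCommGroup X] [NormedSpace ℂ X] (u : X) :
    Set (X →L[ℂ] ℂ) :=
  {f | ‖f‖ = 1 ∧ f u = 1}

/-- `γ^u(x) = sup {|f(x)| : f ∈ S(X;u)}`. -/
noncomputable def geomGamma {X : Type*} [NormedAddCommGroup X] [NormedSpace ℂ X]
    (u x : X) : ℝ :=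
  sSup {r : ℝ | ∃ f ∈ geomStates u, r = ‖f x‖}

/-- `n(X;u) = inf {γ^u(x) : ‖x‖ = 1}`. -/
noncomputable def geomN {X : Type*} [NormedAddCommGroup X] [NormedSpace ℂ X] (u : X) : ℝ :=
  sInf {r : ℝ | ∃ x : X, ‖x‖ = 1 ∧ r = geomGamma u x}

open scoped InnerProductSpace

section NumericalRadius

variable {V : Type*} [SeminormedAddCommGroup V] [InnerProductSpace ℂ V]

theorem norm_inner_map_le_of_forall_norm_inner_self_le (T : V →ₗ[ℂ] V) {w : ℝ}
    (hT : ∀ a, ‖⟪T a, a⟫_ℂ‖ ≤ w * ‖a‖ ^ 2) (x y : V) :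
    ‖⟪T y, x⟫_ℂ‖ ≤ w * (‖x‖ ^ 2 + ‖y‖ ^ 2) := by
  have hIy : ‖Complex.I • y‖ = ‖y‖ := by rw [norm_smul, Complex.norm_I, one_mul]
  have h₁ := parallelogram_law_with_norm ℂ x y
  have h₂ := parallelogram_law_with_norm ℂ x (Complex.I • y)
  have h₃ := hT (x + y)
  have h₄ := hT (x - y)
  have h₅ := hT (x + Complex.I • y)
  have h₆ := hT (x - Complex.I • y)
  rw [inner_map_polarization, norm_div, RCLike.norm_ofNat, div_le_iff₀ four_pos]
  generalize ⟪T (x + y), x + y⟫_ℂ = p at h₃ ⊢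
  generalize ⟪T (x - y), x - y⟫_ℂ = q at h₄ ⊢
  generalize ⟪T (x + Complex.I • y), x + Complex.I • y⟫_ℂ = r at h₅ ⊢
  generalize ⟪T (x - Complex.I • y), x - Complex.I • y⟫_ℂ = s at h₆ ⊢
  calc ‖p - q + Complex.I * r - Complex.I * s‖ ≤ ‖p‖ + ‖q‖ + ‖r‖ + ‖s‖ := by
        have := norm_sub_le p q
        have := norm_add_le (p - q) (Complex.I * r)
        have := norm_sub_le (p - q + Complex.I * r) (Complex.I * s)
        simp only [norm_mul, Complex.norm_I, one_mul] at *
        linarith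
    _ ≤ w * (‖x‖ ^ 2 + ‖y‖ ^ 2) * 4 := by
        rw [hIy] at h₂
        linear_combination h₃ + h₄ + h₅ + h₆ + w * h₁ + w * h₂

theorem ContinuousLinearMap.norm_le_two_mul_of_forall_norm_inner_self_le (T : V →L[ℂ] V)
    {w : ℝ} (hw : 0 ≤ w) (hT : ∀ a, ‖⟪T a, a⟫_ℂ‖ ≤ w * ‖a‖ ^ 2) : ‖T‖ ≤ 2 * w := by
  refine T.opNorm_le_bound (by positivity) fun y ↦ ?_
  rcases (norm_nonneg (T y)).eq_or_lt with hTy | hTy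
  · rw [← hTy]; positivity
  -- test the sesquilinear bound against the rescaling of `T y` that has the norm of `y`
  set t : ℝ := ‖y‖ / ‖T y‖
  have ht : 0 ≤ t := by positivity
  have hnorm : ‖(t : ℂ) • T y‖ = ‖y‖ := by
    rw [norm_smul, Complex.norm_real, Real.norm_of_nonneg ht, div_mul_cancel₀ _ hTy.ne']
  have hinner : ‖⟪T y, (t : ℂ) • T y⟫_ℂ‖ = ‖y‖ * ‖T y‖ := by
    rw [inner_smul_right, inner_self_eq_norm_sq_to_K, norm_mul, norm_pow]
    simp only [Complex.norm_real, Real.norm_of_nonneg ht, RCLike.norm_ofReal, abs_norm, t]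
    field_simp
  have key := norm_inner_map_le_of_forall_norm_inner_self_le T.toLinearMap hT ((t : ℂ) • T y) y
  rw [ContinuousLinearMap.coe_coe, hinner, hnorm] at key
  have hy : 0 < ‖y‖ := pos_of_mul_pos_right (hTy.trans_le (T.le_opNorm y)) (norm_nonneg T)
  exact le_of_mul_le_mul_left (by linarith) hy

end NumericalRadius

section GeomGamma

variable {X : Type*} [NormedAddCommGroup X] [NormedSpace ℂ X]

theorem geomGamma_nonneg (u x : X) : 0 ≤ geomGamma u x :=
  Real.sSup_nonneg fun _ ⟨_, _, hr⟩ ↦ hr ▸ norm_nonneg _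

theorem norm_apply_le_geomGamma {u : X} {f : X →L[ℂ] ℂ} (hf : f ∈ geomStates u) (x : X) :
    ‖f x‖ ≤ geomGamma u x := by
  refine le_csSup ⟨‖x‖, ?_⟩ ⟨f, hf, rfl⟩
  rintro _ ⟨g, hg, rfl⟩
  simpa [hg.1] using g.le_opNorm x

theorem le_geomN {u x₀ : X} (hx₀ : ‖x₀‖ = 1) {r : ℝ}
    (hr : ∀ x : X, ‖x‖ = 1 → r ≤ geomGamma u x) : r ≤ geomN u :=
  le_csInf ⟨_, x₀, hx₀, rfl⟩ fun _ ⟨x, hx, hr'⟩ ↦ hr' ▸ hr x hx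

variable {Y : Type*} [NormedAddCommGroup Y] [NormedSpace ℂ Y]

theorem comp_mem_geomStates {u : X} (hu : ‖u‖ ≤ 1) {Ψ : X →L[ℂ] Y} (hΨ : ‖Ψ‖ ≤ 1)
    {g : Y →L[ℂ] ℂ} (hg : g ∈ geomStates (Ψ u)) : g.comp Ψ ∈ geomStates u := by
  have hgu : g.comp Ψ u = 1 := hg.2
  refine ⟨le_antisymm ?_ ?_, hgu⟩
  · calc ‖g.comp Ψ‖ ≤ ‖g‖ * ‖Ψ‖ := g.opNorm_comp_le Ψ
      _ ≤ 1 := by rw [hg.1, one_mul]; exact hΨ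
  · calc (1 : ℝ) = ‖g.comp Ψ u‖ := by rw [hgu, norm_one]
      _ ≤ ‖g.comp Ψ‖ * ‖u‖ := (g.comp Ψ).le_opNorm u
      _ ≤ ‖g.comp Ψ‖ := mul_le_of_le_one_right (norm_nonneg _) hu

theorem geomGamma_map_le {u : X} (hu : ‖u‖ ≤ 1) {Ψ : X →L[ℂ] Y} (hΨ : ‖Ψ‖ ≤ 1) (x : X) :
    geomGamma (Ψ u) (Ψ x) ≤ geomGamma u x :=
  Real.sSup_le (fun _ ⟨_, hg, hr⟩ ↦ hr ▸ norm_apply_le_geomGamma (comp_mem_geomStates hu hΨ hg) x)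
    (geomGamma_nonneg u x)

end GeomGamma

section VectorState

variable {H : Type*} [NormedAddCommGroup H] [InnerProductSpace ℂ H]

noncomputable def vectorState (h : H) : (H →L[ℂ] H) →L[ℂ] ℂ :=
  (innerSL ℂ h).comp (ContinuousLinearMap.apply ℂ H h)

@[simp]
theorem vectorState_apply (h : H) (T : H →L[ℂ] H) : vectorState h T = ⟪h, T h⟫_ℂ := rfl

theorem vectorState_mem_geomStates {h : H} (hh : ‖h‖ = 1) :
    vectorState h ∈ geomStates (ContinuousLinearMap.id ℂ H) := by
  have hid : vectorState h (ContinuousLinearMap.id ℂ H) = 1 := by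
    simp [inner_self_eq_norm_sq_to_K, hh]
  refine ⟨le_antisymm ?_ ?_, hid⟩
  · refine ContinuousLinearMap.opNorm_le_bound _ zero_le_one fun T ↦ ?_
    calc ‖⟪h, T h⟫_ℂ‖ ≤ ‖h‖ * ‖T h‖ := norm_inner_le_norm h (T h)
      _ ≤ ‖h‖ * (‖T‖ * ‖h‖) := by gcongr; exact T.le_opNorm h
      _ = 1 * ‖T‖ := by rw [hh]; ring
  · calc (1 : ℝ) = ‖vectorState h (ContinuousLinearMap.id ℂ H)‖ := by rw [hid, norm_one]
      _ ≤ ‖vectorState h‖ * ‖ContinuousLinearMap.id ℂ H‖ := (vectorState h).le_opNorm _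
      _ ≤ ‖vectorState h‖ :=
        mul_le_of_le_one_right (by positivity) ContinuousLinearMap.norm_id_le

theorem norm_inner_self_le_geomGamma_id_mul (T : H →L[ℂ] H) (a : H) :
    ‖⟪T a, a⟫_ℂ‖ ≤ geomGamma (ContinuousLinearMap.id ℂ H) T * ‖a‖ ^ 2 := by
  rcases eq_or_ne a 0 with rfl | ha
  · simp
  have hna : 0 < ‖a‖ := norm_pos_iff.2 ha
  set h : H := ((‖a‖⁻¹ : ℝ) : ℂ) • a
  have hh : ‖h‖ = 1 := by
    rw [norm_smul, Complex.norm_real, Real.norm_of_nonneg (by positivity), inv_mul_cancel₀ hna.ne']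
  have hstate := norm_apply_le_geomGamma (vectorState_mem_geomStates hh) T
  have hscale : ‖⟪h, T h⟫_ℂ‖ = ‖⟪T a, a⟫_ℂ‖ / ‖a‖ ^ 2 := by
    rw [map_smul, inner_smul_left, inner_smul_right, norm_mul, norm_mul, RCLike.norm_conj,
      Complex.norm_real, Real.norm_of_nonneg (by positivity), norm_inner_symm]
    field_simp
  rwa [vectorState_apply, hscale, div_le_iff₀ (by positivity)] at hstate

theorem norm_le_two_mul_geomGamma_id (T : H →L[ℂ] H) :
    ‖T‖ ≤ 2 * geomGamma (ContinuousLinearMap.id ℂ H) T :=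
  T.norm_le_two_mul_of_forall_norm_inner_self_le (geomGamma_nonneg _ _)
    (norm_inner_self_le_geomGamma_id_mul T)

end VectorState

theorem div_two_le_geomN_of_map_operators {X : Type*} [NormedAddCommGroup X] [NormedSpace ℂ X]
    {H : Type*} [NormedAddCommGroup H] [InnerProductSpace ℂ H]
    {u : X} (hu : ‖u‖ = 1) {Ψ : X →L[ℂ] (H →L[ℂ] H)} (hΨ : ‖Ψ‖ ≤ 1)
    (hΨu : Ψ u = ContinuousLinearMap.id ℂ H) {c : ℝ} (hinj : ∀ x : X, c * ‖x‖ ≤ ‖Ψ x‖) :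
    c / 2 ≤ geomN u := by
  refine le_geomN hu fun x hx ↦ ?_
  calc c / 2 = c * ‖x‖ / 2 := by rw [hx, mul_one]
    _ ≤ ‖Ψ x‖ / 2 := by gcongr; exact hinj x
    _ ≤ geomGamma (ContinuousLinearMap.id ℂ H) (Ψ x) := by
        linarith [norm_le_two_mul_geomGamma_id (Ψ x)]
    _ ≤ geomGamma u x := hΨu ▸ geomGamma_map_le hu.le hΨ x

theorem geomN_ge_half_of_unital_contractive_injection_into_operators_general
    {X : Type*} [NormedAddCommGroup X] [NormedSpace ℂ X]
    {H : Type*} [NormedAddCommGroup H] [InnerProductSpace ℂ H]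
    (u : X) (hu : ‖u‖ = 1)
    (Ψ : X →L[ℂ] (H →L[ℂ] H)) (hΨ : ‖Ψ‖ ≤ 1) (hΨu : Ψ u = ContinuousLinearMap.id ℂ H)
    (c : ℝ) (hc : 0 < c) (hinj : ∀ x : X, c * ‖x‖ ≤ ‖Ψ x‖) :
    c / 2 ≤ geomN u ∧ 0 < geomN u ∧ ((∀ x : X, ‖Ψ x‖ = ‖x‖) → 1 / 2 ≤ geomN u) := by
  have hc2 := div_two_le_geomN_of_map_operators hu hΨ hΨu hinj
  refine ⟨hc2, by linarith, fun hiso ↦ ?_⟩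
  exact div_two_le_geomN_of_map_operators hu hΨ hΨu fun x ↦ by rw [one_mul, hiso x]

theorem geomN_ge_half_of_unital_contractive_injection_into_operators
    {X : Type*} [NormedAddCommGroup X] [NormedSpace ℂ X]
    {H : Type*} [NormedAddCommGroup H] [InnerProductSpace ℂ H] [CompleteSpace H]
    (u : X) (hu : ‖u‖ = 1)
    (Ψ : X →L[ℂ] (H →L[ℂ] H)) (hΨ : ‖Ψ‖ ≤ 1) (hΨu : Ψ u = ContinuousLinearMap.id ℂ H)
    (c : ℝ) (hc : 0 < c) (hinj : ∀ x : X, c * ‖x‖ ≤ ‖Ψ x‖) :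
    c / 2 ≤ geomN u ∧ 0 < geomN u ∧ ((∀ x : X, ‖Ψ x‖ = ‖x‖) → 1 / 2 ≤ geomN u) :=
  geomN_ge_half_of_unital_contractive_injection_into_operators_general u hu Ψ hΨ hΨu c hc hinj
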